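/- arXiv:1511.06907 — 2 statements merged into one kernel-verified Lean document; each statement's English description precedes it below -/
import Mathlib

section
/- If (RG)^- is anticommutative, then for x, y ∈ G with x^* ≠ x and y^* ≠ y such that xy = yx, one has xy = x^*y^* = y^*x^*, xy^* = y^*x, x^*y = yx^*, and 2(1 + σ(xy)) = 0 = 2(σ(x) + σ(y)) in R. -/
open Finsupp

/-- The generalized oriented map σ* on the group ring RG. -/
noncomputable def sigmaStar {R : Type} [CommRing R] {G : Type} [Group G]
    (inv : G → G) (σ : G →* Rˣ) (α : MonoidAlgebra R G) : MonoidAlgebra R G :=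
  α.coeff.sum fun x a => MonoidAlgebra.single (inv x) ((σ x : R) * a)

/-- The set of skew-symmetric elements of RG under σ*. -/
def skewSet {R : Type} [CommRing R] {G : Type} [Group G]
    (inv : G → G) (σ : G →* Rˣ) : Set (MonoidAlgebra R G) :=
  {α | sigmaStar inv σ α = -α}

/-!
Write `α_g = g - σ(g) g^*`; it lies in `(RG)^-` for every `g`, and so does `2s` for a `*`-fixed
`s` with `2σ(s) = -2`. Every claim is read off one coefficient of an anticommutator that must
vanish: the coefficient of `g g^*` and of `g²` in `2 α_g²` gives `g g^* = g^* g` and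
`2(1 + σ(g)²) = 0` (the alternative would be `2σ(g) = 0` or `2 = 0`); the coefficient of `xy` in
`α_x α_y + α_y α_x` forces `xy = x^* y^*` and `2(1 + σ(x)σ(y)) = 0`; so `s = xy` is `*`-fixed with
`2σ(s) = -2`, and the coefficients of `g s` and `g^* s` in `α_g (2s) + (2s) α_g`, for `g = x, y`,
give `4 = 0` and `s g^* = g^* s`.
-/

section SkewElements

variable {R : Type} [CommRing R] {G : Type} [Group G] {inv : G → G} {σ : G →* Rˣ}

def SkewAnticommutative (inv : G → G) (σ : G →* Rˣ) : Prop :=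
  ∀ α ∈ skewSet inv σ, ∀ β ∈ skewSet inv σ, α * β + β * α = 0

/-- `g - σ*(g) = g - σ(g) g^*`. -/
noncomputable def skewPart (inv : G → G) (σ : G →* Rˣ) (g : G) : MonoidAlgebra R G :=
  MonoidAlgebra.single g 1 - MonoidAlgebra.single (inv g) (σ g : R)

lemma sigmaStar_single (g : G) (r : R) :
    sigmaStar inv σ (MonoidAlgebra.single g r) =
      MonoidAlgebra.single (inv g) ((σ g : R) * r) := by
  unfold sigmaStar
  rw [MonoidAlgebra.coeff_single]
  exact sum_single_index (by simp)

lemma sigmaStar_sub (α β : MonoidAlgebra R G) :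
    sigmaStar inv σ (α - β) = sigmaStar inv σ α - sigmaStar inv σ β := by
  unfold sigmaStar
  rw [MonoidAlgebra.coeff_sub]
  exact sum_sub_index fun _ _ _ => by rw [mul_sub, MonoidAlgebra.single_sub]

lemma sigma_inv_mul_sigma (hinv : ∀ g : G, inv (inv g) = g)
    (hcompat : ∀ g : G, g * inv g ∈ σ.ker) (g : G) : (σ (inv g) : R) * σ g = 1 := by
  have h := hcompat (inv g)
  rw [MonoidHom.mem_ker, hinv, map_mul] at h
  exact congrArg Units.val h

lemma skewPart_mem_skewSet (hinv : ∀ g : G, inv (inv g) = g)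
    (hcompat : ∀ g : G, g * inv g ∈ σ.ker) (g : G) : skewPart inv σ g ∈ skewSet inv σ := by
  change sigmaStar inv σ (MonoidAlgebra.single g 1 - MonoidAlgebra.single (inv g) (σ g : R)) = _
  rw [sigmaStar_sub, sigmaStar_single, sigmaStar_single, hinv, mul_one,
    sigma_inv_mul_sigma hinv hcompat, skewPart, neg_sub]

lemma single_mem_skewSet {s : G} {r : R} (hs : inv s = s) (hr : (σ s : R) * r = -r) :
    MonoidAlgebra.single s r ∈ skewSet inv σ := by
  change sigmaStar inv σ (MonoidAlgebra.single s r) = _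
  rw [sigmaStar_single, hs, hr, MonoidAlgebra.single_neg]

lemma anticommutator_coeff_eq_zero (hanti : SkewAnticommutative inv σ)
    {α β : MonoidAlgebra R G} (hα : α ∈ skewSet inv σ) (hβ : β ∈ skewSet inv σ) (t : G) :
    (α * β).coeff t + (β * α).coeff t = 0 := by
  rw [← Finsupp.add_apply, ← MonoidAlgebra.coeff_add, hanti α hα β hβ]
  rfl

lemma coeff_skewPart_mul_skewPart [DecidableEq G] (g h t : G) :
    (skewPart inv σ g * skewPart inv σ h).coeff t =
      (if g * h = t then 1 else 0) - (if g * inv h = t then (σ h : R) else 0)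
        - (if inv g * h = t then (σ g : R) else 0)
        + (if inv g * inv h = t then (σ g : R) * σ h else 0) := by
  simp only [skewPart, sub_mul, mul_sub, MonoidAlgebra.single_mul_single, one_mul, mul_one,
    MonoidAlgebra.coeff_sub, MonoidAlgebra.coeff_single, Finsupp.sub_apply, Finsupp.single_apply]
  ring

lemma coeff_skewPart_mul_single [DecidableEq G] (g s t : G) (r : R) :
    (skewPart inv σ g * MonoidAlgebra.single s r).coeff t =
      (if g * s = t then r else 0) - (if inv g * s = t then (σ g : R) * r else 0) := by
  simp only [skewPart, sub_mul, MonoidAlgebra.single_mul_single, one_mul,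
    MonoidAlgebra.coeff_sub, MonoidAlgebra.coeff_single, Finsupp.sub_apply, Finsupp.single_apply]

lemma coeff_single_mul_skewPart [DecidableEq G] (g s t : G) (r : R) :
    (MonoidAlgebra.single s r * skewPart inv σ g).coeff t =
      (if s * g = t then r else 0) - (if s * inv g = t then r * σ g else 0) := by
  simp only [skewPart, mul_sub, MonoidAlgebra.single_mul_single, mul_one,
    MonoidAlgebra.coeff_sub, MonoidAlgebra.coeff_single, Finsupp.sub_apply, Finsupp.single_apply]

lemma commute_inv_and_two_mul_one_add_sigma_sq (hinv : ∀ g : G, inv (inv g) = g)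
    (hcompat : ∀ g : G, g * inv g ∈ σ.ker) (hanti : SkewAnticommutative inv σ)
    (h2 : (2 : R) ≠ 0) {g : G} (hg : inv g ≠ g) :
    Commute g (inv g) ∧ 2 * (1 + (σ g : R) * σ g) = 0 := by
  classical
  have hα := skewPart_mem_skewSet hinv hcompat g
  have e := anticommutator_coeff_eq_zero hanti hα hα
  simp only [coeff_skewPart_mul_skewPart] at e
  have hg' : g ≠ inv g := hg.symm
  constructor
  · by_contra hc
    have hc' : inv g * g ≠ g * inv g := Ne.symm hc
    have e' := e (g * inv g)
    simp only [mul_right_inj, mul_left_inj, hg, hg', hc', if_true, if_false, zero_sub, sub_zero,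
      add_zero] at e'
    exact h2 ((σ g).mul_right_eq_zero.mp (by linear_combination -e'))
  · have e' := e (g * g)
    simp only [mul_right_inj, mul_left_inj, hg, if_true, if_false, sub_zero] at e'
    split_ifs at e'
    · linear_combination e'
    · exact absurd (by linear_combination e') h2

lemma mul_eq_inv_mul_inv_and_two_mul_one_add_sigma_mul (hinv : ∀ g : G, inv (inv g) = g)
    (hcompat : ∀ g : G, g * inv g ∈ σ.ker) (hanti : SkewAnticommutative inv σ)
    (h2 : (2 : R) ≠ 0) {x y : G} (hx : inv x ≠ x) (hy : inv y ≠ y)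
    (hxy : Commute x y) (hxy' : Commute (inv x) (inv y)) :
    x * y = inv x * inv y ∧ 2 * (1 + (σ x : R) * σ y) = 0 := by
  classical
  have e := anticommutator_coeff_eq_zero hanti (skewPart_mem_skewSet hinv hcompat x)
    (skewPart_mem_skewSet hinv hcompat y) (x * y)
  have hyx : y * inv x ≠ x * y := by rw [hxy.eq, Ne, mul_right_inj]; exact hx
  have hyx' : inv y * x ≠ x * y := by rw [hxy.eq, Ne, mul_left_inj]; exact hy
  simp only [coeff_skewPart_mul_skewPart, ← hxy.eq, ← hxy'.eq, mul_right_inj, mul_left_inj, hx, hy,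
    hyx, hyx', if_true, if_false, sub_zero] at e
  split_ifs at e with h
  · exact ⟨h.symm, by linear_combination e⟩
  · exact absurd (by linear_combination e) h2

lemma commute_inv_and_four_eq_zero (hinv : ∀ g : G, inv (inv g) = g)
    (hcompat : ∀ g : G, g * inv g ∈ σ.ker) (hanti : SkewAnticommutative inv σ)
    (h2 : (2 : R) ≠ 0) {s g : G} (hs : inv s = s) (hσs : (σ s : R) * 2 = -2)
    (hg : inv g ≠ g) (hgs : Commute g s) :
    Commute s (inv g) ∧ (4 : R) = 0 := by
  classical
  have e := anticommutator_coeff_eq_zero hanti (skewPart_mem_skewSet hinv hcompat g)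
    (single_mem_skewSet hs hσs)
  simp only [coeff_skewPart_mul_single, coeff_single_mul_skewPart] at e
  have hg' : g ≠ inv g := hg.symm
  constructor
  · have e' := e (inv g * s)
    simp only [← hgs.eq, mul_left_inj, hg', if_true, if_false, zero_sub] at e'
    split_ifs at e' with h
    · exact h
    · exact absurd ((σ g).mul_right_eq_zero.mp (by linear_combination -e')) h2
  · have hsg : s * inv g ≠ g * s := by rw [hgs.eq, Ne, mul_right_inj]; exact hg
    have e' := e (g * s)
    simp only [← hgs.eq, mul_left_inj, hg, hsg, if_true, if_false, sub_zero] at e'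
    linear_combination e'

end SkewElements

theorem stmt8 {R : Type} [CommRing R] (hchar : ringChar R ≠ 2) {G : Type} [Group G]
    (inv : G → G) (hmul : ∀ x y : G, inv (x * y) = inv y * inv x)
    (hinv : ∀ x : G, inv (inv x) = x) (σ : G →* Rˣ) (hnt : σ ≠ 1)
    (hcompat : ∀ x : G, x * inv x ∈ σ.ker)
    (hanti : ∀ α ∈ skewSet inv σ, ∀ β ∈ skewSet inv σ, α * β + β * α = 0)
    (x y : G) (hx : inv x ≠ x) (hy : inv y ≠ y) (hcomm : x * y = y * x) :
    x * y = inv x * inv y ∧ inv x * inv y = inv y * inv x ∧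
    x * inv y = inv y * x ∧ inv x * y = y * inv x ∧
    2 * (1 + (σ (x * y) : R)) = 0 ∧ 2 * ((σ x : R) + (σ y : R)) = 0 := by
  have : Nontrivial R := by
    by_contra h
    rw [not_nontrivial_iff_subsingleton] at h
    exact hnt (MonoidHom.ext fun _ => Subsingleton.elim _ _)
  have h2 := Ring.two_ne_zero hchar
  have hcomm' : Commute (inv x) (inv y) := by
    rw [Commute, SemiconjBy, ← hmul, ← hmul, hcomm]
  obtain ⟨hxx, hσx⟩ := commute_inv_and_two_mul_one_add_sigma_sq hinv hcompat hanti h2 hx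
  obtain ⟨hyy, -⟩ := commute_inv_and_two_mul_one_add_sigma_sq hinv hcompat hanti h2 hy
  obtain ⟨hxy, hσxy⟩ := mul_eq_inv_mul_inv_and_two_mul_one_add_sigma_mul hinv hcompat hanti
    h2 hx hy hcomm hcomm'
  have hσ : (σ (x * y) : R) = σ x * σ y := by rw [map_mul, Units.val_mul]
  have hs : inv (x * y) = x * y := by rw [hmul, ← hcomm'.eq, ← hxy]
  have hσs : (σ (x * y) : R) * 2 = -2 := by rw [hσ]; linear_combination hσxy
  obtain ⟨hsx, h4⟩ := commute_inv_and_four_eq_zero hinv hcompat hanti h2 hs hσs hx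
    ((Commute.refl x).mul_right hcomm)
  obtain ⟨hsy, -⟩ := commute_inv_and_four_eq_zero hinv hcompat hanti h2 hs hσs hy
    ((Commute.symm hcomm).mul_right (Commute.refl y))
  have hxy' : Commute x (inv y) := by simpa using hsy.mul_left hyy.inv_left
  have hyx' : Commute y (inv x) := by simpa using hxx.inv_left.mul_left hsx
  refine ⟨hxy, hcomm', hxy', hyx'.symm, ?_, ?_⟩
  · rw [hσ]; linear_combination hσxy
  · linear_combination (σ x : R) * hσxy - (σ y : R) * hσx + (σ y : R) * h4
end

section
/- If (RG)^- is anticommutative, then for all y ∈ G_*, x ∈ G \ G_*, and α ∈ R with αy ∈ (RG)^-: (i) y^{-1}xy ∈ {x, x^*}; (ii) xy ∈ G_* if and only if xy ≠ yx; (iii) if xy ≠ yx then ασ(x) = α, and if xy = yx then 2α = 0. -/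
open Finsupp

/-!
For `x ∉ G_*` the element `γ = x - σ(x) x*` is skew, and the coefficient of `x x*` in
`γ² + γ² = 0` is `-2σ(x)(1 + [x* x = x x*])`, which forces `4 = 0`. For `y ∈ G_*`, `c y` is skew
as soon as `σ(y) c = -c`, and the coefficient of `x y` in `c y γ + γ c y = 0` is
`c (1 + [y x = x y] - σ(x) [y x* = x y])`. As `σ(y)² = 1`, `4 = 0` and `2 ≠ 0`, some `c ≠ 0`
satisfies `σ(y) c = -c` (`c = 1 - σ(y)`, or `c = 2` if `σ(y) = 1`), so `x y` equals `y x` or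
`y x*`; with `c = α` the same coefficient gives (iii).
-/

theorem exists_ne_zero_mul_eq_neg {R : Type} [CommRing R] {u : R} (hu : u * u = 1)
    (h4 : (4 : R) = 0) (h2 : (2 : R) ≠ 0) : ∃ c ≠ 0, u * c = -c := by
  by_cases h1 : u = 1
  · exact ⟨2, h2, by rw [h1]; linear_combination h4⟩
  · exact ⟨1 - u, sub_ne_zero.mpr (Ne.symm h1), by linear_combination -hu⟩

namespace MonoidAlgebra

variable {R : Type} [CommRing R] {G : Type} [Group G] (inv : G → G) (σ : G →* Rˣ)

theorem mem_skewSet_iff {a : MonoidAlgebra R G} :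
    a ∈ skewSet inv σ ↔ sigmaStar inv σ a = -a := Iff.rfl

theorem sigmaStar_single (g : G) (r : R) :
    sigmaStar inv σ (single g r) = single (inv g) (σ g * r) := by
  rw [sigmaStar, coeff_single, Finsupp.sum_single_index (by simp)]

theorem sigmaStar_sub (a b : MonoidAlgebra R G) :
    sigmaStar inv σ (a - b) = sigmaStar inv σ a - sigmaStar inv σ b := by
  rw [sigmaStar, coeff_sub]
  exact Finsupp.sum_sub_index fun _ _ _ => by rw [mul_sub, single_sub]

theorem single_mem_skewSet {g : G} (hg : inv g = g) {c : R} (hc : (σ g : R) * c = -c) :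
    single g c ∈ skewSet inv σ := by
  rw [mem_skewSet_iff, sigmaStar_single, hg, hc, single_neg]

noncomputable def skewElem (g : G) : MonoidAlgebra R G :=
  single g 1 - single (inv g) (σ g : R)

theorem skewElem_mem_skewSet (hinv : ∀ g, inv (inv g) = g)
    (hcompat : ∀ g, g * inv g ∈ σ.ker) (g : G) : skewElem inv σ g ∈ skewSet inv σ := by
  have h : σ (inv g) * σ g = 1 := by simpa [hinv] using hcompat (inv g)
  rw [mem_skewSet_iff, skewElem, sigmaStar_sub, sigmaStar_single, sigmaStar_single, hinv,
    ← Units.val_mul, h]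
  simp

variable {inv σ}

theorem four_eq_zero_of_skewElem_anticomm {x : G} (hx : inv x ≠ x)
    (h : skewElem inv σ x * skewElem inv σ x + skewElem inv σ x * skewElem inv σ x = 0) :
    (4 : R) = 0 := by
  classical
  have hc := congrArg (fun a => a.coeff (x * inv x)) h
  simp only [skewElem, sub_mul, mul_sub, single_mul_single] at hc
  simp [Finsupp.single_apply, hx, hx.symm] at hc
  have h4 : (σ x : R) * 4 = 0 := by
    split_ifs at hc
    · linear_combination -hc
    · linear_combination -2 * hc
  exact (Units.mul_right_eq_zero _).mp h4

open Classical in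
theorem coeff_mul_add_single_skewElem {x y : G} (hx : inv x ≠ x) {c : R}
    (h : single y c * skewElem inv σ x + skewElem inv σ x * single y c = 0) :
    c * (1 + (if y * x = x * y then 1 else 0) - σ x * (if y * inv x = x * y then 1 else 0)) =
      0 := by
  have hc := congrArg (fun a => a.coeff (x * y)) h
  simp [skewElem, sub_mul, mul_sub, single_mul_single, Finsupp.single_apply, hx.symm] at hc
  split_ifs at hc ⊢ <;> linear_combination hc

theorem eq_zero_of_mul_add_single_skewElem {x y : G} (hx : inv x ≠ x) {c : R}
    (h : single y c * skewElem inv σ x + skewElem inv σ x * single y c = 0)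
    (hcomm : y * x ≠ x * y) (hinvcomm : y * inv x ≠ x * y) : c = 0 := by
  simpa [hcomm, hinvcomm] using coeff_mul_add_single_skewElem hx h

theorem two_mul_eq_zero_of_mul_add_single_skewElem {x y : G} (hx : inv x ≠ x) {c : R}
    (h : single y c * skewElem inv σ x + skewElem inv σ x * single y c = 0)
    (hcomm : x * y = y * x) : 2 * c = 0 := by
  have hinvcomm : y * inv x ≠ x * y := fun h' => hx (mul_left_cancel (h'.trans hcomm))
  have := coeff_mul_add_single_skewElem hx h
  rw [if_pos hcomm.symm, if_neg hinvcomm] at this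
  linear_combination this

theorem mul_sigma_eq_of_mul_add_single_skewElem {x y : G} (hx : inv x ≠ x) {c : R}
    (h : single y c * skewElem inv σ x + skewElem inv σ x * single y c = 0)
    (hcomm : x * y ≠ y * x) (hinvcomm : x * y = y * inv x) : c * σ x = c := by
  have := coeff_mul_add_single_skewElem hx h
  rw [if_neg (Ne.symm hcomm), if_pos hinvcomm.symm] at this
  linear_combination -this

theorem mul_comm_or_mul_eq_mul_inv (hinv : ∀ g, inv (inv g) = g)
    (hcompat : ∀ g, g * inv g ∈ σ.ker)
    (hanti : ∀ α ∈ skewSet inv σ, ∀ β ∈ skewSet inv σ, α * β + β * α = 0) (h2 : (2 : R) ≠ 0)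
    {y : G} (hy : inv y = y) {x : G} (hx : inv x ≠ x) : x * y = y * x ∨ x * y = y * inv x := by
  by_contra! hxy
  have hσy : (σ y : R) * σ y = 1 := by
    have h : σ y * σ y = 1 := by simpa [hy] using hcompat y
    rw [← Units.val_mul, h, Units.val_one]
  have hγ := skewElem_mem_skewSet inv σ hinv hcompat x
  obtain ⟨c, hc0, hc⟩ := exists_ne_zero_mul_eq_neg hσy
    (four_eq_zero_of_skewElem_anticomm hx (hanti _ hγ _ hγ)) h2
  exact hc0 (eq_zero_of_mul_add_single_skewElem hx
    (hanti _ (single_mem_skewSet inv σ hy hc) _ hγ) (Ne.symm hxy.1) (Ne.symm hxy.2))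

end MonoidAlgebra

open MonoidAlgebra

theorem stmt12 {R : Type} [CommRing R] (hchar : ringChar R ≠ 2) {G : Type} [Group G]
    (inv : G → G) (hmul : ∀ x y : G, inv (x * y) = inv y * inv x)
    (hinv : ∀ x : G, inv (inv x) = x) (σ : G →* Rˣ) (hnt : σ ≠ 1)
    (hcompat : ∀ x : G, x * inv x ∈ σ.ker)
    (hanti : ∀ α ∈ skewSet inv σ, ∀ β ∈ skewSet inv σ, α * β + β * α = 0)
    (y : G) (hy : inv y = y) (x : G) (hx : inv x ≠ x)
    (α : R) (hα : (MonoidAlgebra.single y α : MonoidAlgebra R G) ∈ skewSet inv σ) :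
    (y⁻¹ * x * y = x ∨ y⁻¹ * x * y = inv x) ∧
    (inv (x * y) = x * y ↔ x * y ≠ y * x) ∧
    (x * y ≠ y * x → α * (σ x : R) = α) ∧ (x * y = y * x → 2 * α = 0) := by
  have : Nontrivial R := by
    by_contra h
    rw [not_nontrivial_iff_subsingleton] at h
    exact hnt (MonoidHom.ext fun _ => Units.ext (Subsingleton.elim _ _))
  have hxy := mul_comm_or_mul_eq_mul_inv hinv hcompat hanti (Ring.two_ne_zero hchar) hy hx
  have hαγ := hanti _ hα _ (skewElem_mem_skewSet inv σ hinv hcompat x)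
  refine ⟨?_, ?_, fun hne =>
    mul_sigma_eq_of_mul_add_single_skewElem hx hαγ hne (hxy.resolve_left hne),
    two_mul_eq_zero_of_mul_add_single_skewElem hx hαγ⟩
  · rcases hxy with h | h
    · left; rw [mul_assoc, h, inv_mul_cancel_left]
    · right; rw [mul_assoc, h, inv_mul_cancel_left]
  · rw [hmul, hy]
    exact ⟨fun h hcomm => hx (mul_left_cancel (h.trans hcomm)),
      fun h => (hxy.resolve_left h).symm⟩
end
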